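/- arXiv:2412.18018 — 2 statements merged into one kernel-verified Lean document; each statement's English description precedes it below -/
import Mathlib

section
/- For every N ≥ 2, every KC-PMI P on N parties, and every party ℓ ∈ ⟦N⟧, let Q^ℓ = { e_X : e_X is a hyperedge of H_P and ℓ ∈ X }. Then either v_ℓ is an isolated vertex of H_P (contained in no hyperedge) and Q^ℓ = ∅, or Q^ℓ is contained in exactly one max-clique of the line graph L_{H_P}. -/
namespace HEC

/-- The parties `⟦N⟧ = {0,1,…,N}`, where `0` is the purifier. -/
abbrev Party (N : ℕ) := Fin (N + 1)

/-- A collection of parties. -/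
abbrev PSet (N : ℕ) := Finset (Party N)

/-- MI instances: unordered pairs of subsets of parties. -/
abbrev MI (N : ℕ) := Sym2 (PSet N)

/-- `m` is an MI instance, i.e. an unordered pair of disjoint nonempty subsets of `⟦N⟧`. -/
def IsMIInst {N : ℕ} (m : MI N) : Prop :=
  ∃ Y Z : PSet N, m = s(Y, Z) ∧ Y.Nonempty ∧ Z.Nonempty ∧ Disjoint Y Z

/-- The MI-poset order: `{Y,Z} ⪯ {Y',Z'}` iff (`Y ⊆ Y'` and `Z ⊆ Z'`) or
(`Y ⊆ Z'` and `Z ⊆ Y'`).  (The two cases are absorbed by the existential over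
representatives of the unordered pairs.) -/
def MIle {N : ℕ} (m m' : MI N) : Prop :=
  ∃ Y Z Y' Z' : PSet N, m = s(Y, Z) ∧ m' = s(Y', Z') ∧ Y ⊆ Y' ∧ Z ⊆ Z'

/-- An `N`-party entropy vector, extended to all subsets of `⟦N⟧` by the purification
convention: `S ∅ = 0` and `S Y = S (⟦N⟧ \ Y)` whenever `0 ∈ Y`. -/
structure EntropyVec (N : ℕ) where
  S : PSet N → ℝ
  S_empty : S ∅ = 0
  S_purify : ∀ Y : PSet N, (0 : Party N) ∈ Y → S Y = S (Finset.univ \ Y)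

/-- Mutual information `I(Y:Z) = S_Y + S_Z - S_{Y∪Z}`. -/
def EntropyVec.I {N : ℕ} (v : EntropyVec N) (Y Z : PSet N) : ℝ :=
  v.S Y + v.S Z - v.S (Y ∪ Z)

/-- Membership in the subadditivity cone: `I(Y:Z) ≥ 0` for every MI instance. -/
def EntropyVec.InSAC {N : ℕ} (v : EntropyVec N) : Prop :=
  ∀ Y Z : PSet N, Y.Nonempty → Z.Nonempty → Disjoint Y Z → 0 ≤ v.I Y Z

/-- The pattern of marginal independence of `v`: the MI instances vanishing on `v`. -/
def EntropyVec.PMI {N : ℕ} (v : EntropyVec N) : Set (MI N) :=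
  {m | ∃ Y Z : PSet N, m = s(Y, Z) ∧ Y.Nonempty ∧ Z.Nonempty ∧ Disjoint Y Z ∧ v.I Y Z = 0}

/-- `P` is a down-set in the MI-poset. -/
def IsMIDownSet {N : ℕ} (P : Set (MI N)) : Prop :=
  ∀ m m' : MI N, IsMIInst m → m' ∈ P → MIle m m' → m ∈ P

/-- `P` is a KC-PMI: the PMI of some entropy vector in the subadditivity cone,
which moreover is a down-set in the MI-poset. -/
def IsKCPMI {N : ℕ} (P : Set (MI N)) : Prop :=
  (∃ v : EntropyVec N, v.InSAC ∧ P = v.PMI) ∧ IsMIDownSet P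

/-- The β-set of `X`: all MI instances `{Y,Z}` with `Y ∪ Z = X`. -/
def betaSet {N : ℕ} (X : PSet N) : Set (MI N) :=
  {m | ∃ Y Z : PSet N, m = s(Y, Z) ∧ Y.Nonempty ∧ Z.Nonempty ∧ Disjoint Y Z ∧ Y ∪ Z = X}

/-- The antichain `A` of minimal elements of `P̄ = M_N ∖ P`. -/
def minimalMI {N : ℕ} (P : Set (MI N)) : Set (MI N) :=
  {m | IsMIInst m ∧ m ∉ P ∧ ∀ m' : MI N, IsMIInst m' → m' ∉ P → MIle m' m → m' = m}

/-- `β(X)` is positive: `β(X) ⊆ P̄`. -/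
def BPos {N : ℕ} (P : Set (MI N)) (X : PSet N) : Prop :=
  ∀ m ∈ betaSet X, m ∉ P

/-- `β(X)` is vanishing: `β(X) ⊆ P`. -/
def BVan {N : ℕ} (P : Set (MI N)) (X : PSet N) : Prop :=
  betaSet X ⊆ P

/-- `β(X)` is partial: it has elements both in `P` and in `P̄`. -/
def BPart {N : ℕ} (P : Set (MI N)) (X : PSet N) : Prop :=
  (∃ m ∈ betaSet X, m ∈ P) ∧ (∃ m ∈ betaSet X, m ∉ P)

/-- `β(X)` is essential: `β(X) ∩ A ≠ ∅`. -/
def BEss {N : ℕ} (P : Set (MI N)) (X : PSet N) : Prop :=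
  ∃ m ∈ betaSet X, m ∈ minimalMI P

/-- `β(X)` is completely essential: `β(X) ⊆ A`. -/
def BCEss {N : ℕ} (P : Set (MI N)) (X : PSet N) : Prop :=
  betaSet X ⊆ minimalMI P

/-- `β(X)` is non-essential: `β(X) ∩ A = ∅`. -/
def BNEss {N : ℕ} (P : Set (MI N)) (X : PSet N) : Prop :=
  ∀ m ∈ betaSet X, m ∉ minimalMI P

/-- `pos_<(Y)`: the proper subsystems `Z ⊊ Y` with `|Z| ≥ 2` and `β(Z)` positive. -/
def posBelow {N : ℕ} (P : Set (MI N)) (Y : PSet N) : Set (PSet N) :=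
  {Z | Z ⊂ Y ∧ 2 ≤ Z.card ∧ BPos P Z}

/-- `Max(pos_<(Y))`: the inclusion-maximal elements of `pos_<(Y)`. -/
def maxPosBelow {N : ℕ} (P : Set (MI N)) (Y : PSet N) : Set (PSet N) :=
  {Z | Z ∈ posBelow P Y ∧ ∀ Z' ∈ posBelow P Y, Z ⊆ Z' → Z = Z'}

/-- The MI instance `m = {Y,Z}` splits `X` if `X ∩ Y ≠ ∅` and `X ∩ Z ≠ ∅`. -/
def Splits {N : ℕ} (m : MI N) (X : PSet N) : Prop :=
  ∃ Y Z : PSet N, m = s(Y, Z) ∧ (X ∩ Y).Nonempty ∧ (X ∩ Z).Nonempty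

/-- The hyperedges of the correlation hypergraph `H_P`: one hyperedge `e_X` for each
`X ⊆ ⟦N⟧` (with `|X| ≥ 2`) whose β-set is positive.  Vertices `v_ℓ` are identified
with the parties `ℓ ∈ ⟦N⟧`, and hyperedges with the corresponding subsystems. -/
def Hedge {N : ℕ} (P : Set (MI N)) : Set (PSet N) :=
  {X | 2 ≤ X.card ∧ BPos P X}

/-- The hyperedges of the sub-hypergraph `H_Y`: the hyperedges `e_Z` with `Z ⊊ Y`. -/
def subEdges {N : ℕ} (P : Set (MI N)) (Y : PSet N) : Set (PSet N) :=
  {Z | Z ⊂ Y ∧ Z ∈ Hedge P}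

/-- One step in a hypergraph with hyperedge set `E`: `a` and `b` lie in a common
hyperedge. -/
def hStep {N : ℕ} (E : Set (PSet N)) (a b : Party N) : Prop :=
  ∃ e ∈ E, a ∈ e ∧ b ∈ e

/-- Connectivity of the hypergraph with vertex set `V` and hyperedge set `E`:
every two vertices are joined by a path (a one-vertex hypergraph is connected). -/
def hConn {N : ℕ} (V : PSet N) (E : Set (PSet N)) : Prop :=
  ∀ a ∈ V, ∀ b ∈ V, Relation.ReflTransGen (hStep E) a b

/-- The vertex set of the connected component of `a` in the hypergraph with
vertex set `V` and hyperedge set `E`. -/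
def hComp {N : ℕ} (V : PSet N) (E : Set (PSet N)) (a : Party N) : Set (Party N) :=
  {b | b ∈ V ∧ Relation.ReflTransGen (hStep E) a b}

/-- A clique of the line graph `L_{H_P}`: a set of hyperedges of `H_P` which are
pairwise adjacent (distinct hyperedges being adjacent iff they intersect). -/
def IsLineClique {N : ℕ} (P : Set (MI N)) (Q : Set (PSet N)) : Prop :=
  Q ⊆ Hedge P ∧ ∀ e ∈ Q, ∀ f ∈ Q, e ≠ f → (e ∩ f).Nonempty

/-- A max-clique of the line graph `L_{H_P}`: a (nonempty) clique which is maximal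
under inclusion. -/
def IsMaxClique {N : ℕ} (P : Set (MI N)) (Q : Set (PSet N)) : Prop :=
  Q.Nonempty ∧ IsLineClique P Q ∧ ∀ Q' : Set (PSet N), IsLineClique P Q' → Q ⊆ Q' → Q = Q'

/-- `Q^∩`: the intersection of the hyperedges in `Q`, viewed as sets of vertices. -/
def qInter {N : ℕ} (Q : Set (PSet N)) : Set (Party N) :=
  {ℓ | ∀ e ∈ Q, ℓ ∈ e}

/-!
The hyperedges that meet every hyperedge through `v_ℓ` contain every clique containing `Q^ℓ`,
so it suffices to show that they pairwise intersect. If `e ∌ ℓ` meets every hyperedge through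
`ℓ`, then for `B ∌ ℓ` disjoint from `e` the set `ℓB` is not a hyperedge, and induction on `B`
with the chain rule for `I` gives `I(ℓ:B) = 0`. Two disjoint such sets `a`, `b` would give
`I(ℓ:b) = I(ℓ:⟦N⟧∖ℓb) = 0`; by purification these two sum to `2 S_ℓ`, which is positive as soon
as `ℓ` lies on a hyperedge.
-/

section Entropy

variable {N : ℕ} (v : EntropyVec N)

namespace EntropyVec

lemma S_compl (Y : PSet N) : v.S Y = v.S (Finset.univ \ Y) := by
  by_cases h : (0 : Party N) ∈ Y
  · exact v.S_purify Y h
  · have h' := v.S_purify (Finset.univ \ Y) (by simp [h])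
    rwa [Finset.sdiff_sdiff_self_left, Finset.univ_inter, eq_comm] at h'

lemma I_comm (Y Z : PSet N) : v.I Y Z = v.I Z Y := by
  unfold EntropyVec.I
  rw [Finset.union_comm]
  ring

lemma I_empty_left (Z : PSet N) : v.I ∅ Z = 0 := by
  simp [EntropyVec.I, v.S_empty]

lemma I_empty_right (Y : PSet N) : v.I Y ∅ = 0 := by
  rw [I_comm, I_empty_left]

lemma I_union_add_I (X Y Z : PSet N) :
    v.I X (Y ∪ Z) + v.I Y Z = v.I (X ∪ Y) Z + v.I X Y := by
  unfold EntropyVec.I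
  rw [Finset.union_assoc]
  ring

lemma I_add_I_compl {A B : PSet N} (h : Disjoint A B) :
    v.I A B + v.I A (Finset.univ \ (A ∪ B)) = 2 * v.S A := by
  have hcompl : Finset.univ \ (A ∪ (Finset.univ \ (A ∪ B))) = B := by
    ext x
    have := fun hx : x ∈ A => Finset.disjoint_left.mp h hx
    simp only [Finset.mem_sdiff, Finset.mem_univ, Finset.mem_union, true_and]
    tauto
  have h₁ := v.S_compl (A ∪ B)
  have h₂ := v.S_compl (A ∪ (Finset.univ \ (A ∪ B)))
  rw [hcompl] at h₂
  unfold EntropyVec.I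
  linarith

lemma mem_PMI_iff {Y Z : PSet N} (hY : Y.Nonempty) (hZ : Z.Nonempty) (hYZ : Disjoint Y Z) :
    s(Y, Z) ∈ v.PMI ↔ v.I Y Z = 0 := by
  refine ⟨?_, fun h => ⟨Y, Z, rfl, hY, hZ, hYZ, h⟩⟩
  rintro ⟨Y', Z', hm, -, -, -, hI⟩
  rcases Sym2.eq_iff.mp hm with ⟨rfl, rfl⟩ | ⟨rfl, rfl⟩
  · exact hI
  · rwa [I_comm]

lemma exists_split_of_not_BPos {A : PSet N} (h : ¬ BPos v.PMI A) {a : Party N} (ha : a ∈ A) :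
    ∃ Y Z : PSet N, Y ∪ Z = A ∧ a ∈ Y ∧ Z.Nonempty ∧ Disjoint Y Z ∧ v.I Y Z = 0 := by
  simp only [BPos, not_forall, not_not] at h
  obtain ⟨-, ⟨Y, Z, rfl, hY, hZ, hYZ, rfl⟩, hmem⟩ := h
  have hI := (v.mem_PMI_iff hY hZ hYZ).mp hmem
  rcases Finset.mem_union.mp ha with haY | haZ
  · exact ⟨Y, Z, rfl, haY, hZ, hYZ, hI⟩
  · exact ⟨Z, Y, Finset.union_comm Z Y, haZ, hY, hYZ.symm, (v.I_comm Z Y).trans hI⟩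

variable {v}

lemma InSAC.I_nonneg (hv : v.InSAC) {Y Z : PSet N} (hYZ : Disjoint Y Z) :
    0 ≤ v.I Y Z := by
  rcases Y.eq_empty_or_nonempty with rfl | hY
  · rw [I_empty_left]
  rcases Z.eq_empty_or_nonempty with rfl | hZ
  · rw [I_empty_right]
  exact hv Y Z hY hZ hYZ

lemma InSAC.I_union_eq_zero (hv : v.InSAC) {A Y Z : PSet N}
    (hA : Disjoint A (Y ∪ Z)) (hYZ : Disjoint Y Z) (h₁ : v.I (A ∪ Y) Z = 0)
    (h₂ : v.I A Y = 0) : v.I A (Y ∪ Z) = 0 := by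
  have := v.I_union_add_I A Y Z
  have := hv.I_nonneg hA
  have := hv.I_nonneg hYZ
  linarith

lemma InSAC.I_pos_of_BPos (hv : v.InSAC) {X Y Z : PSet N}
    (hX : BPos v.PMI X) (hY : Y.Nonempty) (hZ : Z.Nonempty) (hYZ : Disjoint Y Z)
    (hX_eq : Y ∪ Z = X) : 0 < v.I Y Z := by
  have hI : v.I Y Z ≠ 0 := fun h =>
    hX _ ⟨Y, Z, rfl, hY, hZ, hYZ, hX_eq⟩ ((v.mem_PMI_iff hY hZ hYZ).mpr h)
  exact (hv.I_nonneg hYZ).lt_of_ne' hI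

lemma InSAC.S_pos_of_ssubset_of_BPos (hv : v.InSAC) {A X : PSet N}
    (hX : BPos v.PMI X) (hA : A.Nonempty) (hAX : A ⊂ X) : 0 < v.S A := by
  have hdisj : Disjoint A (X \ A) := Finset.disjoint_sdiff
  have hunion : A ∪ (X \ A) = X := Finset.union_sdiff_of_subset hAX.subset
  have hpos := hv.I_pos_of_BPos hX hA (Finset.sdiff_nonempty.mpr hAX.not_subset) hdisj hunion
  have hsum := v.I_add_I_compl hdisj
  have hrest : Disjoint A (Finset.univ \ (A ∪ (X \ A))) :=
    Finset.disjoint_sdiff.mono_left Finset.subset_union_left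
  have := hv.I_nonneg hrest
  linarith

end EntropyVec

end Entropy

section Hypergraph

variable {N : ℕ}

def incidentEdges (P : Set (MI N)) (ℓ : Party N) : Set (PSet N) :=
  {X ∈ Hedge P | ℓ ∈ X}

def HitsIncidentEdges (P : Set (MI N)) (ℓ : Party N) (e : PSet N) : Prop :=
  ∀ X ∈ incidentEdges P ℓ, (X ∩ e).Nonempty

def hittingEdges (P : Set (MI N)) (ℓ : Party N) : Set (PSet N) :=
  {Y ∈ Hedge P | HitsIncidentEdges P ℓ Y}

lemma nonempty_of_mem_Hedge {P : Set (MI N)} {X : PSet N} (hX : X ∈ Hedge P) : X.Nonempty :=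
  Finset.card_pos.mp (by have := hX.1; omega)

lemma incidentEdges_subset_hittingEdges (P : Set (MI N)) (ℓ : Party N) :
    incidentEdges P ℓ ⊆ hittingEdges P ℓ :=
  fun _ hY => ⟨hY.1, fun _ hX => ⟨ℓ, Finset.mem_inter.mpr ⟨hX.2, hY.2⟩⟩⟩

lemma subset_hittingEdges {P : Set (MI N)} {ℓ : Party N} {Q : Set (PSet N)}
    (hQ : IsLineClique P Q) (hℓQ : incidentEdges P ℓ ⊆ Q) : Q ⊆ hittingEdges P ℓ := by
  refine fun Y hY => ⟨hQ.1 hY, fun X hX => ?_⟩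
  by_cases hXY : X = Y
  · rw [hXY, Finset.inter_self]
    exact nonempty_of_mem_Hedge (hQ.1 hY)
  · exact hQ.2 X (hℓQ hX) Y hY hXY

lemma existsUnique_isMaxClique_of_isLineClique_hittingEdges {P : Set (MI N)} {ℓ : Party N}
    (hclique : IsLineClique P (hittingEdges P ℓ)) (hne : (incidentEdges P ℓ).Nonempty) :
    ∃! Q : Set (PSet N), IsMaxClique P Q ∧ incidentEdges P ℓ ⊆ Q := by
  have hsub := incidentEdges_subset_hittingEdges P ℓ
  have hmax : IsMaxClique P (hittingEdges P ℓ) :=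
    ⟨hne.mono hsub, hclique, fun Q hQ hle =>
      hle.antisymm (subset_hittingEdges hQ (hsub.trans hle))⟩
  exact ⟨_, ⟨hmax, hsub⟩, fun Q ⟨hQ, hℓQ⟩ =>
    hQ.2.2 _ hclique (subset_hittingEdges hQ.2.1 hℓQ)⟩

end Hypergraph

section Correlation

variable {N : ℕ} {v : EntropyVec N}

lemma I_singleton_eq_zero_of_hitsIncidentEdges (hv : v.InSAC) {ℓ : Party N} {e : PSet N}
    (hℓe : ℓ ∉ e) (he : HitsIncidentEdges v.PMI ℓ e) (B : PSet N) (hℓB : ℓ ∉ B)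
    (hBe : Disjoint B e) : v.I {ℓ} B = 0 := by
  induction B using Finset.strongInduction with
  | H B ih =>
  rcases B.eq_empty_or_nonempty with rfl | hB
  · exact v.I_empty_right _
  have hnot : ¬ BPos v.PMI (insert ℓ B) := by
    intro hpos
    have hcard : 2 ≤ (insert ℓ B).card := by
      rw [Finset.card_insert_of_notMem hℓB]
      have := hB.card_pos
      omega
    obtain ⟨x, hx⟩ := he _ ⟨⟨hcard, hpos⟩, Finset.mem_insert_self ℓ B⟩
    obtain ⟨hxB, hxe⟩ := Finset.mem_inter.mp hx
    rcases Finset.mem_insert.mp hxB with rfl | hxB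
    · exact hℓe hxe
    · exact Finset.disjoint_left.mp hBe hxB hxe
  obtain ⟨Y, Z, hYZ, hℓY, hZ, hdisj, hI⟩ :=
    v.exists_split_of_not_BPos hnot (Finset.mem_insert_self ℓ B)
  have hℓZ : ℓ ∉ Z := Finset.disjoint_left.mp hdisj hℓY
  have hB_eq : Y.erase ℓ ∪ Z = B := by
    rw [← Finset.erase_eq_of_notMem hℓZ, ← Finset.erase_union_distrib, hYZ,
      Finset.erase_insert hℓB]
  have hdisj' : Disjoint (Y.erase ℓ) Z := hdisj.mono_left (Finset.erase_subset ℓ Y)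
  have hssub : Y.erase ℓ ⊂ B := by
    rw [← hB_eq]
    refine left_lt_sup.mpr fun hZY => ?_
    exact hZ.ne_empty (disjoint_self.mp (hdisj'.mono_left hZY))
  have hrest : v.I {ℓ} (Y.erase ℓ) = 0 :=
    ih _ hssub (Finset.notMem_erase ℓ Y) (hBe.mono_left hssub.subset)
  rw [← hB_eq]
  refine hv.I_union_eq_zero (by rwa [Finset.disjoint_singleton_left, hB_eq]) hdisj' ?_ hrest
  rwa [← Finset.insert_eq, Finset.insert_erase hℓY]

lemma S_singleton_eq_zero_of_disjoint (hv : v.InSAC) {ℓ : Party N} {a b : PSet N}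
    (hℓa : ℓ ∉ a) (hℓb : ℓ ∉ b) (hab : Disjoint a b) (ha : HitsIncidentEdges v.PMI ℓ a)
    (hb : HitsIncidentEdges v.PMI ℓ b) : v.S {ℓ} = 0 := by
  have h₁ : v.I {ℓ} b = 0 :=
    I_singleton_eq_zero_of_hitsIncidentEdges hv hℓa ha b hℓb hab.symm
  have h₂ : v.I {ℓ} (Finset.univ \ ({ℓ} ∪ b)) = 0 :=
    I_singleton_eq_zero_of_hitsIncidentEdges hv hℓb hb _ (by simp)
      (Finset.sdiff_disjoint.mono_right Finset.subset_union_right)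
  have := v.I_add_I_compl (Finset.disjoint_singleton_left.mpr hℓb)
  linarith

lemma isLineClique_hittingEdges (hv : v.InSAC) {ℓ : Party N} {X : PSet N}
    (hX : X ∈ Hedge v.PMI) (hℓX : ℓ ∈ X) : IsLineClique v.PMI (hittingEdges v.PMI ℓ) := by
  refine ⟨fun _ h => h.1, fun a ha b hb _ => ?_⟩
  by_cases hℓa : ℓ ∈ a
  · exact hb.2 a ⟨ha.1, hℓa⟩
  by_cases hℓb : ℓ ∈ b
  · exact Finset.inter_comm b a ▸ ha.2 b ⟨hb.1, hℓb⟩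
  by_contra hab
  have hS := S_singleton_eq_zero_of_disjoint hv hℓa hℓb
    (Finset.disjoint_iff_inter_eq_empty.mpr (Finset.not_nonempty_iff_eq_empty.mp hab)) ha.2 hb.2
  have hcard := hX.1
  have hpos := hv.S_pos_of_ssubset_of_BPos hX.2 (Finset.singleton_nonempty ℓ)
    (Finset.ssubset_iff_subset_ne.mpr ⟨Finset.singleton_subset_iff.mpr hℓX, by
      rintro rfl
      simp at hcard⟩)
  linarith

end Correlation

theorem statement16_general {N : ℕ} (P : Set (MI N)) (hP : IsKCPMI P)
    (ℓ : Party N) :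
    ((∀ X ∈ Hedge P, ℓ ∉ X) ∧ {X ∈ Hedge P | ℓ ∈ X} = (∅ : Set (PSet N))) ∨
    (∃! Q : Set (PSet N), IsMaxClique P Q ∧ {X ∈ Hedge P | ℓ ∈ X} ⊆ Q) := by
  obtain ⟨⟨v, hv, rfl⟩, -⟩ := hP
  by_cases hiso : ∀ X ∈ Hedge v.PMI, ℓ ∉ X
  · exact Or.inl ⟨hiso, Set.eq_empty_of_forall_notMem fun X hX => hiso X hX.1 hX.2⟩
  · push Not at hiso
    obtain ⟨X, hX, hℓX⟩ := hiso
    exact Or.inr (existsUnique_isMaxClique_of_isLineClique_hittingEdges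
      (isLineClique_hittingEdges hv hX hℓX) ⟨X, hX, hℓX⟩)

/-- For every KC-PMI `P` and party `ℓ`, with
`Q^ℓ = { e_X : e_X a hyperedge of H_P with ℓ ∈ X }`: either `v_ℓ` is an isolated
vertex of `H_P` (contained in no hyperedge) and `Q^ℓ = ∅`, or `Q^ℓ` is contained in
exactly one max-clique of `L_{H_P}`. -/
theorem statement16 {N : ℕ} (hN : 2 ≤ N) (P : Set (MI N)) (hP : IsKCPMI P)
    (ℓ : Party N) :
    ((∀ X ∈ Hedge P, ℓ ∉ X) ∧ {X ∈ Hedge P | ℓ ∈ X} = (∅ : Set (PSet N))) ∨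
    (∃! Q : Set (PSet N), IsMaxClique P Q ∧ {X ∈ Hedge P | ℓ ∈ X} ⊆ Q) :=
  statement16_general P hP ℓ

end HEC
end

section
/- Let P be a KC-PMI on N parties and let G be a simple N-party holographic graph model whose min-cut entropy vector S(G) satisfies P(S(G)) = P. Then for any distinct subsystems X, X' ⊆ ⟦N⟧ with |X|, |X'| ≥ 2 and β(X), β(X') positive, the minimal min-cuts satisfy mC_X ≠ mC_{X'} and mC_X ∩ mC_{X'} ≠ ∅ if and only if X ∩ X' ≠ ∅; consequently the map e_X ↦ mC_X is a graph isomorphism from the line graph L_{H_P} of the correlation hypergraph of P onto the intersection graph of the family Σ = { mC_X : β(X) positive }. -/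
namespace HEC

/-- An `N`-party holographic graph model: a finite weighted graph with no loops or
multiple edges (encoded by a symmetric nonnegative weight function whose support is
the edge set, so that every edge has strictly positive weight and the diagonal
vanishes), together with a labeling of the boundary vertices (those with
`label v = some ℓ`) by parties in `⟦N⟧` such that every party labels at least one
boundary vertex. -/
structure GraphModel (N : ℕ) where
  V : Type
  [fintypeV : Fintype V]
  [decEqV : DecidableEq V]
  w : V → V → ℝ
  w_symm : ∀ u v : V, w u v = w v u
  w_loopless : ∀ v : V, w v v = 0
  w_nonneg : ∀ u v : V, 0 ≤ w u v
  label : V → Option (Party N)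
  label_surj : ∀ ℓ : Party N, ∃ v : V, label v = some ℓ

attribute [instance] GraphModel.fintypeV GraphModel.decEqV

/-- `C` is a `Y`-cut: its intersection with the boundary vertices consists exactly of
the boundary vertices labeled by parties in `Y`. -/
def IsCut {N : ℕ} (G : GraphModel N) (Y : PSet N) (C : Finset G.V) : Prop :=
  ∀ v : G.V, ∀ ℓ : Party N, G.label v = some ℓ → (v ∈ C ↔ ℓ ∈ Y)

/-- The cost `‖C‖` of a cut: the total weight of the edges with exactly one endpoint
in `C`. -/
def cutCost {N : ℕ} (G : GraphModel N) (C : Finset G.V) : ℝ :=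
  ∑ u ∈ C, ∑ v ∈ Cᶜ, G.w u v

/-- `C` is a min-cut for `Y`: a `Y`-cut of minimal cost among all `Y`-cuts. -/
def IsMinCut {N : ℕ} (G : GraphModel N) (Y : PSet N) (C : Finset G.V) : Prop :=
  IsCut G Y C ∧ ∀ C' : Finset G.V, IsCut G Y C' → cutCost G C ≤ cutCost G C'

/-- `C` is a minimal min-cut for `Y`: a min-cut for `Y` which is minimal with respect
to set inclusion among all min-cuts for `Y`. -/
def IsMinimalMinCut {N : ℕ} (G : GraphModel N) (Y : PSet N) (C : Finset G.V) : Prop :=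
  IsMinCut G Y C ∧ ∀ C' : Finset G.V, IsMinCut G Y C' → C' ⊆ C → C' = C

/-- The min-cut entropy `S_Y`: the minimum of `‖C‖` over all `Y`-cuts. -/
noncomputable def gEntropy {N : ℕ} (G : GraphModel N) (Y : PSet N) : ℝ :=
  sInf (cutCost G '' {C : Finset G.V | IsCut G Y C})

/-- The mutual information `I(Y:Z) = S_Y + S_Z - S_{Y∪Z}` computed from min-cuts. -/
noncomputable def gMI {N : ℕ} (G : GraphModel N) (Y Z : PSet N) : ℝ :=
  gEntropy G Y + gEntropy G Z - gEntropy G (Y ∪ Z)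

/-- Reachability inside the subgraph of `G` induced by the vertex set `C`. -/
def Reaches {N : ℕ} (G : GraphModel N) (C : Finset G.V) : G.V → G.V → Prop :=
  Relation.ReflTransGen (fun a b => a ∈ C ∧ b ∈ C ∧ 0 < G.w a b)

/-- `D` is the vertex set of a connected component of the subgraph of `G` induced
by `C`. -/
def IsCompOf {N : ℕ} (G : GraphModel N) (C D : Finset G.V) : Prop :=
  ∃ v ∈ C, ∀ u : G.V, u ∈ D ↔ (u ∈ C ∧ Reaches G C v u)

/-- The graph model is simple: the labeling is a bijection between the boundary
vertices and `⟦N⟧`, i.e. every party labels exactly one vertex. -/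
def IsSimple {N : ℕ} (G : GraphModel N) : Prop :=
  ∀ ℓ : Party N, ∃! v : G.V, G.label v = some ℓ

/-- The underlying simple graph of a graph model: an edge wherever the weight is
strictly positive. -/
def GraphModel.toSimpleGraph {N : ℕ} (G : GraphModel N) : SimpleGraph G.V where
  Adj u v := 0 < G.w u v
  symm := by
    constructor
    intro u v h
    rw [G.w_symm v u]
    exact h
  loopless := by
    constructor
    intro v h
    rw [G.w_loopless v] at h
    exact lt_irrefl 0 h

/-- The min-cut entropy extended by the purification convention: for subsystems
containing the purifier `0`, `S_Y = S_{⟦N⟧∖Y}`. -/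
noncomputable def extEntropy {N : ℕ} (G : GraphModel N) (Y : PSet N) : ℝ :=
  if (0 : Party N) ∈ Y then gEntropy G (Finset.univ \ Y) else gEntropy G Y

/-- Mutual information computed from the (extended) min-cut entropy vector of `G`. -/
noncomputable def extMI {N : ℕ} (G : GraphModel N) (Y Z : PSet N) : ℝ :=
  extEntropy G Y + extEntropy G Z - extEntropy G (Y ∪ Z)

/-- The PMI `P(S(G))` of the min-cut entropy vector of `G`. -/
def modelPMI {N : ℕ} (G : GraphModel N) : Set (MI N) :=
  {m | ∃ Y Z : PSet N, m = s(Y, Z) ∧ Y.Nonempty ∧ Z.Nonempty ∧ Disjoint Y Z ∧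
    extMI G Y Z = 0}

section Statement18Aux

open Finset in
private noncomputable def chi {N : ℕ} (G : GraphModel N) (C : Finset G.V) (u v : G.V) : ℝ :=
  if u ∈ C ∧ v ∉ C then G.w u v else 0

private lemma cutCost_eq_sum_chi {N : ℕ} (G : GraphModel N) (C : Finset G.V) :
    cutCost G C = ∑ u : G.V, ∑ v : G.V, chi G C u v := by
  unfold cutCost chi
  rw [← Finset.sum_subset (Finset.subset_univ C)]
  · refine Finset.sum_congr rfl fun u hu => ?_
    rw [← Finset.sum_subset (Finset.subset_univ Cᶜ)]
    · refine Finset.sum_congr rfl fun v hv => ?_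
      simp [hu, Finset.mem_compl.mp hv]
    · intro v _ hv
      simp [hu, Finset.mem_compl.not.mp hv]
  · intro u _ hu
    apply Finset.sum_eq_zero
    intro v _
    simp [hu]

private lemma chi_posi {N : ℕ} (G : GraphModel N) (A B : Finset G.V) (u v : G.V) :
    chi G (A \ B) u v + chi G (B \ A) u v + (chi G (A \ B) v u + chi G (B \ A) v u)
      ≤ chi G A u v + chi G B u v + (chi G A v u + chi G B v u) := by
  have hw := G.w_nonneg u v
  have hw' := G.w_nonneg v u
  have hs := G.w_symm u v
  unfold chi
  by_cases h1 : u ∈ A <;> by_cases h2 : u ∈ B <;> by_cases h3 : v ∈ A <;> by_cases h4 : v ∈ B <;>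
    simp [Finset.mem_sdiff, h1, h2, h3, h4] <;> linarith

private lemma chi_sub {N : ℕ} (G : GraphModel N) (A B : Finset G.V) (u v : G.V) :
    chi G (A ∩ B) u v + chi G (A ∪ B) u v + (chi G (A ∩ B) v u + chi G (A ∪ B) v u)
      ≤ chi G A u v + chi G B u v + (chi G A v u + chi G B v u) := by
  have hw := G.w_nonneg u v
  have hw' := G.w_nonneg v u
  have hs := G.w_symm u v
  unfold chi
  by_cases h1 : u ∈ A <;> by_cases h2 : u ∈ B <;> by_cases h3 : v ∈ A <;> by_cases h4 : v ∈ B <;>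
    simp [Finset.mem_inter, Finset.mem_union, h1, h2, h3, h4] <;> linarith

private lemma sum_sym_le {N : ℕ} (G : GraphModel N) (f g : G.V → G.V → ℝ)
    (h : ∀ u v, f u v + f v u ≤ g u v + g v u) :
    ∑ u : G.V, ∑ v : G.V, f u v ≤ ∑ u : G.V, ∑ v : G.V, g u v := by
  have key : ∑ u : G.V, ∑ v : G.V, (f u v + f v u) ≤ ∑ u : G.V, ∑ v : G.V, (g u v + g v u) :=
    Finset.sum_le_sum fun u _ => Finset.sum_le_sum fun v _ => h u v
  have hf : ∑ u : G.V, ∑ v : G.V, (f u v + f v u)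
      = 2 * ∑ u : G.V, ∑ v : G.V, f u v := by
    simp only [Finset.sum_add_distrib]
    rw [Finset.sum_comm (f := fun u v => f v u)]
    ring
  have hg : ∑ u : G.V, ∑ v : G.V, (g u v + g v u)
      = 2 * ∑ u : G.V, ∑ v : G.V, g u v := by
    simp only [Finset.sum_add_distrib]
    rw [Finset.sum_comm (f := fun u v => g v u)]
    ring
  rw [hf, hg] at key
  linarith

private lemma cutCost_posimodular {N : ℕ} (G : GraphModel N) (A B : Finset G.V) :
    cutCost G (A \ B) + cutCost G (B \ A) ≤ cutCost G A + cutCost G B := by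
  simp only [cutCost_eq_sum_chi, ← Finset.sum_add_distrib]
  exact sum_sym_le G _ _ (fun u v => chi_posi G A B u v)

private lemma cutCost_submodular {N : ℕ} (G : GraphModel N) (A B : Finset G.V) :
    cutCost G (A ∩ B) + cutCost G (A ∪ B) ≤ cutCost G A + cutCost G B := by
  simp only [cutCost_eq_sum_chi, ← Finset.sum_add_distrib]
  exact sum_sym_le G _ _ (fun u v => chi_sub G A B u v)

/-- Existence of a cut for any subsystem. -/
private lemma exists_cut {N : ℕ} (G : GraphModel N) (X : PSet N) :
    ∃ C : Finset G.V, IsCut G X C := by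
  classical
  refine ⟨Finset.univ.filter (fun v => ∃ ℓ ∈ X, G.label v = some ℓ), ?_⟩
  intro v ℓ hv
  simp only [Finset.mem_filter, Finset.mem_univ, true_and, hv]
  constructor
  · rintro ⟨ℓ', hℓ', h⟩
    obtain rfl : ℓ = ℓ' := by injection h
    exact hℓ'
  · exact fun h => ⟨ℓ, h, rfl⟩

/-- Existence of a minimal min-cut. -/
private lemma exists_minimalMinCut {N : ℕ} (G : GraphModel N) (X : PSet N) :
    ∃ C : Finset G.V, IsMinimalMinCut G X C := by
  classical
  -- first, a min cut
  obtain ⟨C₀, hC₀⟩ := exists_cut G X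
  have hne : (Finset.univ.filter (fun C : Finset G.V => IsCut G X C)).Nonempty :=
    ⟨C₀, by simp [hC₀]⟩
  obtain ⟨C₁, hC₁, hmin₁⟩ := Finset.exists_min_image _ (cutCost G) hne
  have hC₁cut : IsCut G X C₁ := by simpa using hC₁
  have hC₁min : IsMinCut G X C₁ :=
    ⟨hC₁cut, fun C' hC' => hmin₁ C' (by simp [hC'])⟩
  -- then, among min cuts one of minimal cardinality
  have hne2 : (Finset.univ.filter (fun C : Finset G.V => IsMinCut G X C)).Nonempty :=
    ⟨C₁, by simp [hC₁min]⟩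
  obtain ⟨C, hC, hmin⟩ := Finset.exists_min_image _ Finset.card hne2
  have hCmin : IsMinCut G X C := by simpa using hC
  refine ⟨C, hCmin, fun C' hC' hsub => ?_⟩
  have : C.card ≤ C'.card := hmin C' (by simp [hC'])
  exact Finset.eq_of_subset_of_card_le hsub this

/-- Intersections of cuts are cuts for the intersection. -/
private lemma isCut_inter {N : ℕ} (G : GraphModel N) {X X' : PSet N} {C C' : Finset G.V}
    (h : IsCut G X C) (h' : IsCut G X' C') : IsCut G (X ∩ X') (C ∩ C') := by
  intro v ℓ hv
  simp [Finset.mem_inter, h v ℓ hv, h' v ℓ hv]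

private lemma isCut_union {N : ℕ} (G : GraphModel N) {X X' : PSet N} {C C' : Finset G.V}
    (h : IsCut G X C) (h' : IsCut G X' C') : IsCut G (X ∪ X') (C ∪ C') := by
  intro v ℓ hv
  simp [Finset.mem_union, h v ℓ hv, h' v ℓ hv]

private lemma isCut_sdiff {N : ℕ} (G : GraphModel N) {X X' : PSet N} {C C' : Finset G.V}
    (h : IsCut G X C) (h' : IsCut G X' C') : IsCut G (X \ X') (C \ C') := by
  intro v ℓ hv
  simp [Finset.mem_sdiff, h v ℓ hv, h' v ℓ hv]

/-- Uniqueness of the minimal min-cut. -/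
private lemma minimalMinCut_unique {N : ℕ} (G : GraphModel N) {X : PSet N}
    {C C' : Finset G.V} (h : IsMinimalMinCut G X C) (h' : IsMinimalMinCut G X C') :
    C = C' := by
  obtain ⟨⟨hCcut, hCle⟩, hCmin⟩ := h
  obtain ⟨⟨hC'cut, hC'le⟩, hC'min⟩ := h'
  have hicut : IsCut G X (C ∩ C') := by
    have := isCut_inter G hCcut hC'cut
    rwa [Finset.inter_self] at this
  have hucut : IsCut G X (C ∪ C') := by
    have := isCut_union G hCcut hC'cut
    rwa [Finset.union_self] at this
  have h1 : cutCost G C ≤ cutCost G (C ∩ C') := hCle _ hicut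
  have h2 : cutCost G C' ≤ cutCost G (C ∪ C') := hC'le _ hucut
  have h3 := cutCost_submodular G C C'
  have hieq : cutCost G (C ∩ C') = cutCost G C := by linarith
  have hintermin : IsMinCut G X (C ∩ C') :=
    ⟨hicut, fun D hD => hieq ▸ hCle D hD⟩
  have : C ∩ C' = C := hCmin _ hintermin Finset.inter_subset_left
  have hsub : C ⊆ C' := by
    rw [← this]; exact Finset.inter_subset_right
  exact hC'min C ⟨hCcut, hCle⟩ hsub

/-- Minimal min-cuts of disjoint subsystems are disjoint. -/
private lemma minimalMinCut_disjoint {N : ℕ} (G : GraphModel N) {X X' : PSet N}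
    {C C' : Finset G.V} (hXX' : Disjoint X X')
    (h : IsMinimalMinCut G X C) (h' : IsMinimalMinCut G X' C') :
    Disjoint C C' := by
  obtain ⟨⟨hCcut, hCle⟩, hCmin⟩ := h
  obtain ⟨⟨hC'cut, hC'le⟩, hC'min⟩ := h'
  have hd1 : IsCut G X (C \ C') := by
    have := isCut_sdiff G hCcut hC'cut
    rwa [Finset.sdiff_eq_self_of_disjoint hXX'] at this
  have hd2 : IsCut G X' (C' \ C) := by
    have := isCut_sdiff G hC'cut hCcut
    rwa [Finset.sdiff_eq_self_of_disjoint hXX'.symm] at this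
  have h1 : cutCost G C ≤ cutCost G (C \ C') := hCle _ hd1
  have h2 : cutCost G C' ≤ cutCost G (C' \ C) := hC'le _ hd2
  have h3 := cutCost_posimodular G C C'
  have heq : cutCost G (C \ C') = cutCost G C := by linarith
  have hmincut : IsMinCut G X (C \ C') := ⟨hd1, fun D hD => heq ▸ hCle D hD⟩
  have : C \ C' = C := hCmin _ hmincut (Finset.sdiff_subset)
  exact Finset.sdiff_eq_self_iff_disjoint.mp this

/-- Distinct subsystems have distinct cuts. -/
private lemma cut_ne_of_ne {N : ℕ} (G : GraphModel N) {X X' : PSet N}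
    {C C' : Finset G.V} (hne : X ≠ X') (h : IsCut G X C) (h' : IsCut G X' C') :
    C ≠ C' := by
  intro hCC
  apply hne
  ext ℓ
  obtain ⟨v, hv⟩ := G.label_surj ℓ
  rw [← h v ℓ hv, hCC, h' v ℓ hv]

/-- Cuts of intersecting subsystems intersect. -/
private lemma cut_inter_nonempty {N : ℕ} (G : GraphModel N) {X X' : PSet N}
    {C C' : Finset G.V} (hne : (X ∩ X').Nonempty)
    (h : IsCut G X C) (h' : IsCut G X' C') : (C ∩ C').Nonempty := by
  obtain ⟨ℓ, hℓ⟩ := hne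
  rw [Finset.mem_inter] at hℓ
  obtain ⟨v, hv⟩ := G.label_surj ℓ
  exact ⟨v, Finset.mem_inter.mpr ⟨(h v ℓ hv).mpr hℓ.1, (h' v ℓ hv).mpr hℓ.2⟩⟩

end Statement18Aux

/-- Let `P` be a KC-PMI and `G` a simple graph model with
`P(S(G)) = P`.  Then for distinct subsystems `X, X'` with positive β-sets the minimal
min-cuts satisfy `mC_X ≠ mC_{X'}` and `mC_X ∩ mC_{X'} ≠ ∅ ↔ X ∩ X' ≠ ∅`; consequently
`e_X ↦ mC_X` is a graph isomorphism from the line graph `L_{H_P}` onto the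
intersection graph of `Σ = { mC_X : β(X) positive }`. -/
theorem statement18 {N : ℕ} (hN : 2 ≤ N) (P : Set (MI N)) (hP : IsKCPMI P)
    (G : GraphModel N) (hG : IsSimple G) (hreal : modelPMI G = P) :
    (∀ X X' : PSet N, X ≠ X' → 2 ≤ X.card → 2 ≤ X'.card → BPos P X → BPos P X' →
      ∀ CX CX' : Finset G.V, IsMinimalMinCut G X CX → IsMinimalMinCut G X' CX' →
        (CX ≠ CX' ∧ ((CX ∩ CX').Nonempty ↔ (X ∩ X').Nonempty))) ∧
    (∃ F : PSet N → Finset G.V,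
      (∀ X ∈ Hedge P, IsMinimalMinCut G X (F X)) ∧
      Set.BijOn F (Hedge P)
        {C : Finset G.V | ∃ X ∈ Hedge P, IsMinimalMinCut G X C} ∧
      (∀ X ∈ Hedge P, ∀ X' ∈ Hedge P,
        ((X ≠ X' ∧ (X ∩ X').Nonempty) ↔ (F X ≠ F X' ∧ (F X ∩ F X').Nonempty)))) := by
  constructor
  · intro X X' hne _ _ _ _ CX CX' hCX hCX'
    refine ⟨cut_ne_of_ne G hne hCX.1.1 hCX'.1.1, ?_, ?_⟩
    · intro hcc
      by_contra hxx
      rw [Finset.not_nonempty_iff_eq_empty] at hxx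
      have hd := minimalMinCut_disjoint G (Finset.disjoint_iff_inter_eq_empty.mpr hxx) hCX hCX'
      rw [Finset.disjoint_iff_inter_eq_empty] at hd
      rw [hd] at hcc
      exact absurd hcc (by simp)
    · intro hxx
      exact cut_inter_nonempty G hxx hCX.1.1 hCX'.1.1
  · have hex : ∀ X : PSet N, ∃ C, IsMinimalMinCut G X C := exists_minimalMinCut G
    refine ⟨fun X => (hex X).choose, fun X _ => (hex X).choose_spec, ⟨?_, ?_, ?_⟩, ?_⟩
    · intro X hX
      exact ⟨X, hX, (hex X).choose_spec⟩
    · intro X _ X' _ hFF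
      by_contra hne
      exact cut_ne_of_ne G hne (hex X).choose_spec.1.1 (hex X').choose_spec.1.1 hFF
    · rintro C ⟨X, hX, hC⟩
      exact ⟨X, hX, minimalMinCut_unique G (hex X).choose_spec hC⟩
    · intro X _ X' _
      constructor
      · rintro ⟨hne, hint⟩
        exact ⟨cut_ne_of_ne G hne (hex X).choose_spec.1.1 (hex X').choose_spec.1.1,
          cut_inter_nonempty G hint (hex X).choose_spec.1.1 (hex X').choose_spec.1.1⟩
      · rintro ⟨hFne, hFint⟩
        refine ⟨fun h => hFne (by rw [h]), ?_⟩
        by_contra hxx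
        rw [Finset.not_nonempty_iff_eq_empty] at hxx
        have hd := minimalMinCut_disjoint G (Finset.disjoint_iff_inter_eq_empty.mpr hxx)
          (hex X).choose_spec (hex X').choose_spec
        rw [Finset.disjoint_iff_inter_eq_empty] at hd
        rw [hd] at hFint
        exact absurd hFint (by simp)

end HEC
end
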